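/- (Criterion for spontaneous Z₂ violation.) Let B = diag(B₀,−B₁,−B₂,−B₃) with B₀ > B_i, B₃ > B₁ and B₃ > B₂, and let A = (A₀, A₁, A₂, 0) with A₀ > 0, so that V is invariant under the reflection r₃ ↦ −r₃. If A₁²/(B₃−B₁)² + A₂²/(B₃−B₂)² < A₀²/(B₀−B₃)², then every global minimum point ⟨r⟩ of V on the forward light cone has ⟨r₃⟩ ≠ 0. -/

import Mathlib

/-!
On the light cone the term `B₃ r₃²` can be traded for `B₃ (r₀² - r₁² - r₂²)`, after which `V`
is a positive definite quadratic in `(r₀, r₁, r₂)` alone. Completing the square, its minimum over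
the cone is attained exactly at the points whose first three coordinates are the vertex
`(a, b, c) = (A₀/(B₀-B₃), -A₁/(B₃-B₁), -A₂/(B₃-B₂))`, provided such a cone point exists, which is
the case since `a > 0` and `b² + c² < a²`. Every minimiser therefore has `r₃² = a² - b² - c² > 0`.
-/

/-- The forward light cone in ℝ⁴. -/
def lightCone : Set (Fin 4 → ℝ) :=
  {r | 0 ≤ r 0 ∧ (r 0) ^ 2 = (r 1) ^ 2 + (r 2) ^ 2 + (r 3) ^ 2}

noncomputable def potential (A₀ A₁ A₂ B₀ B₁ B₂ B₃ : ℝ) (r : Fin 4 → ℝ) : ℝ :=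
  -A₀ * r 0 + A₁ * r 1 + A₂ * r 2
    + (1 / 2 : ℝ) * (B₀ * (r 0) ^ 2 - B₁ * (r 1) ^ 2 - B₂ * (r 2) ^ 2 - B₃ * (r 3) ^ 2)

section CompletingTheSquare

variable {A₀ A₁ A₂ B₀ B₁ B₂ B₃ a b c : ℝ}

/-- `2 V + const` on the light cone, once `r₃²` is eliminated. -/
def conePotentialForm (B₀ B₁ B₂ B₃ x y z : ℝ) : ℝ :=
  (B₀ - B₃) * x ^ 2 + (B₃ - B₁) * y ^ 2 + (B₃ - B₂) * z ^ 2

theorem potential_eq_of_mem_lightCone (ha : A₀ = (B₀ - B₃) * a) (hb : A₁ = (B₁ - B₃) * b)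
    (hc : A₂ = (B₂ - B₃) * c) {r : Fin 4 → ℝ} (hr : r ∈ lightCone) :
    potential A₀ A₁ A₂ B₀ B₁ B₂ B₃ r =
      (conePotentialForm B₀ B₁ B₂ B₃ (r 0 - a) (r 1 - b) (r 2 - c)
        - conePotentialForm B₀ B₁ B₂ B₃ a b c) / 2 := by
  unfold potential conePotentialForm
  subst ha hb hc
  linear_combination (B₃ / 2) * hr.2

theorem eq_zero_of_conePotentialForm_nonpos (h3 : B₃ < B₀) (h31 : B₁ < B₃) (h32 : B₂ < B₃)
    {x y z : ℝ} (h : conePotentialForm B₀ B₁ B₂ B₃ x y z ≤ 0) : x = 0 ∧ y = 0 ∧ z = 0 := by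
  unfold conePotentialForm at h
  have hx := mul_nonneg (sub_pos.2 h3).le (sq_nonneg x)
  have hy := mul_nonneg (sub_pos.2 h31).le (sq_nonneg y)
  have hz := mul_nonneg (sub_pos.2 h32).le (sq_nonneg z)
  have of_mul_sq_eq_zero {k t : ℝ} (hk : 0 < k) (h : k * t ^ 2 = 0) : t = 0 :=
    pow_eq_zero_iff two_ne_zero |>.1 ((mul_eq_zero.1 h).resolve_left hk.ne')
  exact ⟨of_mul_sq_eq_zero (sub_pos.2 h3) (by linarith),
    of_mul_sq_eq_zero (sub_pos.2 h31) (by linarith),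
    of_mul_sq_eq_zero (sub_pos.2 h32) (by linarith)⟩

theorem eq_vertex_of_potential_le_of_mem_lightCone
    (h3 : B₃ < B₀) (h31 : B₁ < B₃) (h32 : B₂ < B₃)
    (ha : A₀ = (B₀ - B₃) * a) (hb : A₁ = (B₁ - B₃) * b) (hc : A₂ = (B₂ - B₃) * c)
    {q : Fin 4 → ℝ} (hq : q ∈ lightCone) (hq0 : q 0 = a) (hq1 : q 1 = b) (hq2 : q 2 = c)
    {p : Fin 4 → ℝ} (hp : p ∈ lightCone)
    (hmin : potential A₀ A₁ A₂ B₀ B₁ B₂ B₃ p ≤ potential A₀ A₁ A₂ B₀ B₁ B₂ B₃ q) :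
    p 0 = a ∧ p 1 = b ∧ p 2 = c := by
  rw [potential_eq_of_mem_lightCone ha hb hc hp, potential_eq_of_mem_lightCone ha hb hc hq,
    hq0, hq1, hq2] at hmin
  have hvertex : conePotentialForm B₀ B₁ B₂ B₃ (a - a) (b - b) (c - c) = 0 := by
    simp [conePotentialForm]
  have hform : conePotentialForm B₀ B₁ B₂ B₃ (p 0 - a) (p 1 - b) (p 2 - c) ≤ 0 := by
    linarith
  obtain ⟨h0, h1, h2⟩ := eq_zero_of_conePotentialForm_nonpos h3 h31 h32 hform
  exact ⟨sub_eq_zero.1 h0, sub_eq_zero.1 h1, sub_eq_zero.1 h2⟩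

end CompletingTheSquare

theorem exists_mem_lightCone_of_sq_add_sq_le {a b c : ℝ} (ha : 0 ≤ a) (h : b ^ 2 + c ^ 2 ≤ a ^ 2) :
    ∃ q ∈ lightCone, q 0 = a ∧ q 1 = b ∧ q 2 = c :=
  ⟨![a, b, c, √(a ^ 2 - b ^ 2 - c ^ 2)],
    ⟨ha, by simp [Real.sq_sqrt (by linarith : 0 ≤ a ^ 2 - b ^ 2 - c ^ 2)]⟩, rfl, rfl, rfl⟩

theorem stmt14_general (A₀ A₁ A₂ : ℝ) (hA₀ : 0 < A₀) (B₀ B₁ B₂ B₃ : ℝ)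
    (h3 : B₃ < B₀)
    (h31 : B₁ < B₃) (h32 : B₂ < B₃)
    (hcaustic : A₁ ^ 2 / (B₃ - B₁) ^ 2 + A₂ ^ 2 / (B₃ - B₂) ^ 2
      < A₀ ^ 2 / (B₀ - B₃) ^ 2) :
    let V : (Fin 4 → ℝ) → ℝ := fun r =>
      -A₀ * r 0 + A₁ * r 1 + A₂ * r 2
        + (1 / 2 : ℝ) *
          (B₀ * (r 0) ^ 2 - B₁ * (r 1) ^ 2 - B₂ * (r 2) ^ 2 - B₃ * (r 3) ^ 2)
    ∀ p ∈ lightCone, (∀ r ∈ lightCone, V p ≤ V r) → p 3 ≠ 0 := by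
  intro V p hp hmin hp3
  have hB₀₃ := sub_pos.2 h3
  have hB₃₁ := sub_pos.2 h31
  have hB₃₂ := sub_pos.2 h32
  set a := A₀ / (B₀ - B₃)
  set b := -(A₁ / (B₃ - B₁))
  set c := -(A₂ / (B₃ - B₂))
  have hbca : b ^ 2 + c ^ 2 < a ^ 2 := by simpa only [a, b, c, neg_sq, div_pow] using hcaustic
  obtain ⟨q, hq, hq0, hq1, hq2⟩ :=
    exists_mem_lightCone_of_sq_add_sq_le (div_pos hA₀ hB₀₃).le hbca.le
  have ha : A₀ = (B₀ - B₃) * a := (mul_div_cancel₀ A₀ hB₀₃.ne').symm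
  have hb : A₁ = (B₁ - B₃) * b := by rw [← neg_sub, neg_mul_neg, mul_div_cancel₀ A₁ hB₃₁.ne']
  have hc : A₂ = (B₂ - B₃) * c := by rw [← neg_sub, neg_mul_neg, mul_div_cancel₀ A₂ hB₃₂.ne']
  obtain ⟨hp0, hp1, hp2⟩ :=
    eq_vertex_of_potential_le_of_mem_lightCone h3 h31 h32 ha hb hc hq hq0 hq1 hq2 hp (hmin q hq)
  have hcone := hp.2
  rw [hp0, hp1, hp2, hp3] at hcone
  linarith

/-- criterion for spontaneous Z₂ violation: with
B = diag(B₀,−B₁,−B₂,−B₃), B₀ > Bᵢ, B₃ > B₁, B₃ > B₂ and A = (A₀,A₁,A₂,0), A₀ > 0,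
if A₁²/(B₃−B₁)² + A₂²/(B₃−B₂)² < A₀²/(B₀−B₃)² then every global minimum point of V
on the forward light cone has ⟨r₃⟩ ≠ 0. -/
theorem stmt14 (A₀ A₁ A₂ : ℝ) (hA₀ : 0 < A₀) (B₀ B₁ B₂ B₃ : ℝ)
    (h1 : B₁ < B₀) (h2 : B₂ < B₀) (h3 : B₃ < B₀)
    (h31 : B₁ < B₃) (h32 : B₂ < B₃)
    (hcaustic : A₁ ^ 2 / (B₃ - B₁) ^ 2 + A₂ ^ 2 / (B₃ - B₂) ^ 2
      < A₀ ^ 2 / (B₀ - B₃) ^ 2) :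
    let V : (Fin 4 → ℝ) → ℝ := fun r =>
      -A₀ * r 0 + A₁ * r 1 + A₂ * r 2
        + (1 / 2 : ℝ) *
          (B₀ * (r 0) ^ 2 - B₁ * (r 1) ^ 2 - B₂ * (r 2) ^ 2 - B₃ * (r 3) ^ 2)
    ∀ p ∈ lightCone, (∀ r ∈ lightCone, V p ≤ V r) → p 3 ≠ 0 :=
  stmt14_general A₀ A₁ A₂ hA₀ B₀ B₁ B₂ B₃ h3 h31 h32 hcaustic
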